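/- For s ∈ (0,1), the integral ∫₀^{δ} y^{1/s} · (log(e + y^{-1/s}))^{1/s} dy over (0,δ) for small δ > 0 is finite, and as a function of the lower cutoff it satisfies: the integral from a_{k+1} to a_k, where a_k = ∑_{j≥k} j^{-2}, is comparable to k^{-2-1/s} · (log k)^{1/s} for large k. -/

import Mathlib

open MeasureTheory Real Set

/-- `aSeq k = ∑_{j ≥ k} 1/j²`. -/
noncomputable def aSeq (k : ℕ) : ℝ := ∑' j : ℕ, 1 / ((j : ℝ) + (k : ℝ)) ^ 2

/-!
Write `p = 1/s`; the integrand is `(y * log (e + y^(-p)))^p`. From `log x ≤ p * x^(1/p)` it is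
at most `p^p * (e * y^p + 1)`, so it is bounded near `0`. Comparing `1/j²` with the telescoping
terms `1/j - 1/(j+1)` gives `1/k ≤ a_k ≤ 2/k`, so on `(a_{k+1}, a_k)` we have `y ≍ 1/k` and
`log (e + y^(-p)) ≍ log k`; as this interval has length `1/k²`, the integral over it is
`≍ k^(-2-p) * (log k)^p`.
-/

open Filter Topology

lemma Antitone.hasSum_sub_succ {f : ℕ → ℝ} {l : ℝ} (hf : Antitone f)
    (hl : Tendsto f atTop (𝓝 l)) : HasSum (fun n => f n - f (n + 1)) (f 0 - l) := by
  rw [hasSum_iff_tendsto_nat_of_nonneg (fun n => sub_nonneg.2 (hf n.le_succ))]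
  simp_rw [Finset.sum_range_sub']
  exact tendsto_const_nhds.sub hl

lemma hasSum_one_div_add_sub_one_div_add_succ {k : ℕ} (hk : 0 < k) :
    HasSum (fun j : ℕ => 1 / ((j : ℝ) + k) - 1 / ((j : ℝ) + k + 1)) (1 / k) := by
  have hanti : Antitone fun j : ℕ => 1 / ((j : ℝ) + k) := fun i j hij =>
    one_div_le_one_div_of_le (by positivity) (by gcongr)
  have hlim : Tendsto (fun j : ℕ => 1 / ((j : ℝ) + k)) atTop (𝓝 0) := by
    simp_rw [one_div]
    exact tendsto_inv_atTop_zero.comp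
      (tendsto_atTop_add_const_right _ _ tendsto_natCast_atTop_atTop)
  simpa [add_right_comm] using hanti.hasSum_sub_succ hlim

lemma hasSum_aSeq (k : ℕ) : HasSum (fun j : ℕ => 1 / ((j : ℝ) + k) ^ 2) (aSeq k) :=
  ((summable_nat_add_iff k).mpr (Real.summable_one_div_nat_pow.mpr one_lt_two)).congr
    (fun j => by push_cast; rfl) |>.hasSum

lemma aSeq_eq_add_aSeq_succ (k : ℕ) : aSeq k = 1 / (k : ℝ) ^ 2 + aSeq (k + 1) := by
  rw [aSeq, (hasSum_aSeq k).summable.tsum_eq_zero_add, aSeq]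
  push_cast
  simp_rw [add_assoc, add_comm (1 : ℝ)]
  simp

lemma one_div_le_aSeq {k : ℕ} (hk : 0 < k) : 1 / (k : ℝ) ≤ aSeq k := by
  refine hasSum_le (fun j => ?_) (hasSum_one_div_add_sub_one_div_add_succ hk) (hasSum_aSeq k)
  have hx : (0 : ℝ) < j + k := by positivity
  rw [div_sub_div _ _ hx.ne' (by positivity), div_le_div_iff₀ (by positivity) (by positivity)]
  nlinarith

lemma aSeq_le_two_div {k : ℕ} (hk : 0 < k) : aSeq k ≤ 2 / (k : ℝ) := by
  have htel := (hasSum_one_div_add_sub_one_div_add_succ hk).mul_left 2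
  rw [mul_one_div] at htel
  refine hasSum_le (fun j => ?_) (hasSum_aSeq k) htel
  have hx : (1 : ℝ) ≤ j + k := by
    have : (1 : ℝ) ≤ k := by exact_mod_cast hk
    linarith [(Nat.cast_nonneg j : (0 : ℝ) ≤ j)]
  rw [div_sub_div _ _ (by positivity) (by positivity), mul_div_assoc',
    div_le_div_iff₀ (by positivity) (by positivity)]
  nlinarith

lemma Ioo_aSeq_succ_subset_Icc {k : ℕ} (hk : 0 < k) :
    Ioo (aSeq (k + 1)) (aSeq k) ⊆ Icc (1 / (2 * k)) (2 / k) := by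
  have hlow : 1 / (2 * (k : ℝ)) ≤ aSeq (k + 1) := by
    refine le_trans ?_ (one_div_le_aSeq k.succ_pos)
    have : (1 : ℝ) ≤ k := by exact_mod_cast hk
    push_cast
    gcongr
    linarith
  exact fun y hy => ⟨hlow.trans hy.1.le, hy.2.le.trans (aSeq_le_two_div hk)⟩

lemma volume_real_Ioo_aSeq_succ (k : ℕ) :
    volume.real (Ioo (aSeq (k + 1)) (aSeq k)) = 1 / (k : ℝ) ^ 2 := by
  have hstep := aSeq_eq_add_aSeq_succ k
  rw [volume_real_Ioo_of_le] <;> linarith [(by positivity : 0 ≤ 1 / (k : ℝ) ^ 2)]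

noncomputable def rpowLogWeight (p y : ℝ) : ℝ := y ^ p * log (exp 1 + y ^ (-p)) ^ p

lemma one_le_log_exp_one_add {t : ℝ} (ht : 0 ≤ t) : 1 ≤ log (exp 1 + t) :=
  calc 1 = log (exp 1) := (log_exp 1).symm
    _ ≤ log (exp 1 + t) := log_le_log (exp_pos 1) (le_add_of_nonneg_right ht)

lemma rpowLogWeight_nonneg (p : ℝ) {y : ℝ} (hy : 0 ≤ y) : 0 ≤ rpowLogWeight p y := by
  have := one_le_log_exp_one_add (rpow_nonneg hy (-p))
  unfold rpowLogWeight
  positivity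

lemma rpowLogWeight_eq_mul_log_rpow (p : ℝ) {y : ℝ} (hy : 0 ≤ y) :
    rpowLogWeight p y = (y * log (exp 1 + y ^ (-p))) ^ p := by
  have := one_le_log_exp_one_add (rpow_nonneg hy (-p))
  rw [rpowLogWeight, mul_rpow hy (by linarith)]

lemma rpowLogWeight_le {p y : ℝ} (hp : 0 < p) (hy : 0 < y) :
    rpowLogWeight p y ≤ p ^ p * (exp 1 * y ^ p + 1) := by
  set x := exp 1 + y ^ (-p)
  have hx : 0 < x := by positivity
  have hlog : log x ≤ p * x ^ p⁻¹ := by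
    simpa [div_inv_eq_mul, mul_comm] using log_le_rpow_div hx.le (inv_pos.2 hp)
  have hlog_pow : log x ^ p ≤ p ^ p * x := by
    have := one_le_log_exp_one_add (rpow_nonneg hy.le (-p))
    calc log x ^ p ≤ (p * x ^ p⁻¹) ^ p := rpow_le_rpow (by linarith) hlog hp.le
      _ = p ^ p * x := by
        rw [mul_rpow hp.le (by positivity), ← rpow_mul hx.le, inv_mul_cancel₀ hp.ne', rpow_one]
  calc rpowLogWeight p y ≤ y ^ p * (p ^ p * x) := by
        unfold rpowLogWeight
        gcongr
    _ = p ^ p * (exp 1 * y ^ p + 1) := by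
        have : y ^ p * y ^ (-p) = 1 := by
          rw [rpow_neg hy.le, mul_inv_cancel₀ (by positivity)]
        linear_combination p ^ p * this

lemma integrableOn_rpowLogWeight_Ioo {p : ℝ} (hp : 0 < p) (δ : ℝ) :
    IntegrableOn (rpowLogWeight p) (Ioo 0 δ) := by
  refine Measure.integrableOn_of_bounded (M := p ^ p * (exp 1 * δ ^ p + 1))
    measure_Ioo_lt_top.ne (by unfold rpowLogWeight; fun_prop) ?_
  rw [ae_restrict_iff' measurableSet_Ioo]
  refine Eventually.of_forall fun y ⟨hy0, hyδ⟩ => ?_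
  rw [Real.norm_of_nonneg (rpowLogWeight_nonneg p hy0.le)]
  refine (rpowLogWeight_le hp hy0).trans ?_
  gcongr

lemma two_mul_log_two_le_log {k : ℝ} (hk : 4 ≤ k) : 2 * log 2 ≤ log k := by
  rw [← log_rpow two_pos]
  exact log_le_log (by positivity) (by norm_num; linarith)

lemma le_mul_log_exp_one_add_rpow_neg {p k y : ℝ} (hp : 0 < p) (hk : 4 ≤ k)
    (hy : y ∈ Icc (1 / (2 * k)) (2 / k)) :
    p / 4 * (log k / k) ≤ y * log (exp 1 + y ^ (-p)) := by
  have hk0 : 0 < k := by linarith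
  have hy0 : 0 < y := lt_of_lt_of_le (by positivity) hy.1
  have hpow : (k / 2) ^ p ≤ y ^ (-p) := by
    rw [← inv_div, inv_rpow (by positivity), ← rpow_neg (by positivity)]
    exact rpow_le_rpow_of_nonpos hy0 hy.2 (neg_nonpos.2 hp.le)
  have hlog : p / 2 * log k ≤ log (exp 1 + y ^ (-p)) :=
    calc p / 2 * log k ≤ p * (log k - log 2) := by
          nlinarith [two_mul_log_two_le_log hk]
      _ = log ((k / 2) ^ p) := by rw [log_rpow (by positivity), log_div hk0.ne' two_ne_zero]
      _ ≤ log (exp 1 + y ^ (-p)) :=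
          log_le_log (by positivity) (hpow.trans (le_add_of_nonneg_left (exp_pos 1).le))
  have hlogk : 0 ≤ log k := log_nonneg (by linarith)
  calc p / 4 * (log k / k) = 1 / (2 * k) * (p / 2 * log k) := by field_simp; ring
    _ ≤ y * log (exp 1 + y ^ (-p)) := mul_le_mul hy.1 hlog (by positivity) hy0.le

lemma mul_log_exp_one_add_rpow_neg_le {p k y : ℝ} (hp : 0 < p) (hk : 4 ≤ k)
    (hy : y ∈ Icc (1 / (2 * k)) (2 / k)) :
    y * log (exp 1 + y ^ (-p)) ≤ (2 + 4 * p) * (log k / k) := by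
  have hk0 : 0 < k := by linarith
  have hy0 : 0 < y := lt_of_lt_of_le (by positivity) hy.1
  have hpow : y ^ (-p) ≤ (2 * k) ^ p := by
    rw [← inv_inv (2 * k), inv_rpow (by positivity), ← rpow_neg (by positivity), ← one_div]
    exact rpow_le_rpow_of_nonpos (by positivity) hy.1 (neg_nonpos.2 hp.le)
  have hpow_one : 1 ≤ (2 * k) ^ p := one_le_rpow (by linarith) hp.le
  have hlog : log (exp 1 + y ^ (-p)) ≤ (1 + 2 * p) * log k :=
    calc log (exp 1 + y ^ (-p)) ≤ log ((exp 1 + 1) * (2 * k) ^ p) :=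
          log_le_log (by positivity) (by nlinarith [exp_pos 1])
      _ = log (exp 1 + 1) + p * (log 2 + log k) := by
          rw [log_mul (by positivity) (by positivity), log_rpow (by positivity),
            log_mul two_ne_zero hk0.ne']
      _ ≤ (1 + 2 * p) * log k := by
          have he : log (exp 1 + 1) ≤ log k :=
            log_le_log (by positivity) (by linarith [exp_one_lt_d9])
          nlinarith [two_mul_log_two_le_log hk, log_nonneg (by norm_num : (1 : ℝ) ≤ 2)]
  calc y * log (exp 1 + y ^ (-p)) ≤ 2 / k * ((1 + 2 * p) * log k) :=
        mul_le_mul hy.2 hlog (by linarith [one_le_log_exp_one_add (rpow_nonneg hy0.le (-p))])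
          (by positivity)
    _ = (2 + 4 * p) * (log k / k) := by ring

lemma rpowLogWeight_mem_Icc {p k y : ℝ} (hp : 0 < p) (hk : 4 ≤ k)
    (hy : y ∈ Icc (1 / (2 * k)) (2 / k)) :
    rpowLogWeight p y ∈
      Icc ((p / 4) ^ p * (log k / k) ^ p) ((2 + 4 * p) ^ p * (log k / k) ^ p) := by
  have hy0 : 0 ≤ y := le_trans (by positivity) hy.1
  have hlogk : 0 ≤ log k / k := div_nonneg (log_nonneg (by linarith)) (by linarith)
  have hlow_nonneg : 0 ≤ p / 4 * (log k / k) := mul_nonneg (by positivity) hlogk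
  have hge := le_mul_log_exp_one_add_rpow_neg hp hk hy
  rw [rpowLogWeight_eq_mul_log_rpow p hy0, ← mul_rpow (by positivity) hlogk,
    ← mul_rpow (by positivity) hlogk]
  exact ⟨rpow_le_rpow hlow_nonneg hge hp.le,
    rpow_le_rpow (hlow_nonneg.trans hge) (mul_log_exp_one_add_rpow_neg_le hp hk hy) hp.le⟩

lemma setIntegral_mem_Icc_of_forall_mem_Icc {X : Type*} [MeasurableSpace X] {μ : Measure X}
    {s : Set X} {f : X → ℝ} {m M : ℝ} (hs : MeasurableSet s) (hμs : μ s ≠ ⊤)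
    (hf : IntegrableOn f s μ) (hfs : ∀ x ∈ s, f x ∈ Icc m M) :
    ∫ x in s, f x ∂μ ∈ Icc (m * μ.real s) (M * μ.real s) := by
  refine ⟨setIntegral_ge_of_const_le_real hs hμs (fun x hx => (hfs x hx).1) hf, ?_⟩
  rw [mul_comm, ← smul_eq_mul, ← setIntegral_const]
  exact setIntegral_mono_on hf (integrableOn_const hμs) hs fun x hx => (hfs x hx).2

lemma div_rpow_mul_one_div_sq {a k : ℝ} (p : ℝ) (ha : 0 ≤ a) (hk : 0 < k) :
    (a / k) ^ p * (1 / k ^ 2) = k ^ (-2 - p) * a ^ p := by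
  rw [div_rpow ha hk.le, sub_eq_add_neg, rpow_add hk, rpow_neg hk.le, rpow_neg hk.le,
    rpow_two]
  field_simp

lemma setIntegral_Ioo_aSeq_succ_mem_Icc {p : ℝ} (hp : 0 < p) {k : ℕ} (hk : 4 ≤ k) :
    ∫ y in Ioo (aSeq (k + 1)) (aSeq k), rpowLogWeight p y ∈
      Icc ((p / 4) ^ p * (k : ℝ) ^ (-2 - p) * log k ^ p)
        ((2 + 4 * p) ^ p * (k : ℝ) ^ (-2 - p) * log k ^ p) := by
  have hk0 : 0 < k := by omega
  have hk4 : (4 : ℝ) ≤ k := by exact_mod_cast hk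
  have hint : IntegrableOn (rpowLogWeight p) (Ioo (aSeq (k + 1)) (aSeq k)) :=
    (integrableOn_rpowLogWeight_Ioo hp (aSeq k)).mono_set
      (Ioo_subset_Ioo_left (tsum_nonneg fun j => by positivity))
  have h := setIntegral_mem_Icc_of_forall_mem_Icc measurableSet_Ioo measure_Ioo_lt_top.ne hint
    fun y hy => rpowLogWeight_mem_Icc hp hk4 (Ioo_aSeq_succ_subset_Icc hk0 hy)
  rwa [volume_real_Ioo_aSeq_succ, mul_assoc, mul_assoc,
    div_rpow_mul_one_div_sq p (log_nonneg (by linarith)) (by positivity), ← mul_assoc,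
    ← mul_assoc] at h

theorem stmt_15 (s : ℝ) (hs : s ∈ Set.Ioo (0:ℝ) 1) :
    (∀ δ : ℝ, 0 < δ →
      IntegrableOn
        (fun y : ℝ => y ^ (1 / s) * Real.log (Real.exp 1 + y ^ (-(1 / s))) ^ (1 / s))
        (Set.Ioo 0 δ) volume) ∧
    ∃ c C : ℝ, 0 < c ∧ 0 < C ∧ ∃ K : ℕ, ∀ k : ℕ, K ≤ k →
      c * (k : ℝ) ^ (-(2:ℝ) - 1 / s) * Real.log (k : ℝ) ^ (1 / s) ≤
        (∫ y in Set.Ioo (aSeq (k + 1)) (aSeq k),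
          y ^ (1 / s) * Real.log (Real.exp 1 + y ^ (-(1 / s))) ^ (1 / s)) ∧
      (∫ y in Set.Ioo (aSeq (k + 1)) (aSeq k),
          y ^ (1 / s) * Real.log (Real.exp 1 + y ^ (-(1 / s))) ^ (1 / s)) ≤
        C * (k : ℝ) ^ (-(2:ℝ) - 1 / s) * Real.log (k : ℝ) ^ (1 / s) := by
  have hp : 0 < 1 / s := one_div_pos.2 hs.1
  exact ⟨fun δ _ => integrableOn_rpowLogWeight_Ioo hp δ, _, _, rpow_pos_of_pos (by linarith) _,
    rpow_pos_of_pos (by linarith) _, 4, fun k hk => setIntegral_Ioo_aSeq_succ_mem_Icc hp hk⟩
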